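/- For any ξ ∈ Φ and any z ∈ Π_ξ, the conjugacy relation h_ξ(f_ξ(f_ξ(z))) = f_{g(ξ)}(h_ξ(z)) holds; i.e. on Π_ξ the second iterate f_ξ² equals h_ξ⁻¹ ∘ f_{g(ξ)} ∘ h_ξ. -/
import Mathlib


noncomputable section

/-- The parameter region `Φ`: `τ_L > δ_L + 1`, `δ_L > 0`, `τ_R < -(δ_R + 1)`, `δ_R > 0`. -/
def PhiSet : Set (ℝ × ℝ × ℝ × ℝ) :=
  {ξ | ξ.1 > ξ.2.1 + 1 ∧ 0 < ξ.2.1 ∧ ξ.2.2.1 < -(ξ.2.2.2 + 1) ∧ 0 < ξ.2.2.2}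

/-- The renormalisation operator `g`. -/
def gmap (ξ : ℝ × ℝ × ℝ × ℝ) : ℝ × ℝ × ℝ × ℝ :=
  (ξ.2.2.1 ^ 2 - 2 * ξ.2.2.2, ξ.2.2.2 ^ 2, ξ.1 * ξ.2.2.1 - ξ.2.1 - ξ.2.2.2, ξ.2.1 * ξ.2.2.2)

/-- The two-dimensional border-collision normal form `f_ξ`. -/
def fmap (ξ : ℝ × ℝ × ℝ × ℝ) (z : ℝ × ℝ) : ℝ × ℝ :=
  if z.1 ≤ 0 then (ξ.1 * z.1 + z.2 + 1, -(ξ.2.1 * z.1))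
  else (ξ.2.2.1 * z.1 + z.2 + 1, -(ξ.2.2.2 * z.1))

/-- `Π_ξ`, the preimage under `f_ξ` of the closed right half-plane. -/
def PiSet (ξ : ℝ × ℝ × ℝ × ℝ) : Set (ℝ × ℝ) := {z | 0 ≤ (fmap ξ z).1}

/-- The affine change of coordinates `h_ξ`. -/
def hmap (ξ : ℝ × ℝ × ℝ × ℝ) (z : ℝ × ℝ) : ℝ × ℝ :=
  (z.1 / (ξ.2.2.1 + ξ.2.2.2 + 1),
   (ξ.2.2.2 * z.1 + ξ.2.2.1 * z.2 - ξ.2.2.2) / (ξ.2.2.1 + ξ.2.2.2 + 1))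

/-- Proposition 4.1: for `ξ ∈ Φ` and `z ∈ Π_ξ`, `h_ξ(f_ξ²(z)) = f_{g(ξ)}(h_ξ(z))`;
i.e. on `Π_ξ` the second iterate of `f_ξ` is conjugate to `f_{g(ξ)}` via `h_ξ`. -/
theorem second_iterate_conjugacy (ξ : ℝ × ℝ × ℝ × ℝ) (hξ : ξ ∈ PhiSet)
    (z : ℝ × ℝ) (hz : z ∈ PiSet ξ) :
    hmap ξ (fmap ξ (fmap ξ z)) = fmap (gmap ξ) (hmap ξ z) := by
  obtain ⟨τL, δL, τR, δR⟩ := ξ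
  obtain ⟨x, y⟩ := z
  obtain ⟨h1, h2, h3, h4⟩ := hξ
  simp only at h1 h2 h3 h4
  have hs : τR + δR + 1 < 0 := by linarith
  have hs0 : τR + δR + 1 ≠ 0 := ne_of_lt hs
  -- fmap on nonneg first coordinate uses the R formula
  have fmap_pos : ∀ (η : ℝ × ℝ × ℝ × ℝ) (w : ℝ × ℝ), 0 ≤ w.1 →
      fmap η w = (η.2.2.1 * w.1 + w.2 + 1, -(η.2.2.2 * w.1)) := by
    intro η w hw
    unfold fmap
    split
    · have : w.1 = 0 := le_antisymm (by assumption) hw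
      rw [this]; ring_nf
    · rfl
  by_cases hx : x ≤ 0
  · have hz' : 0 ≤ τL * x + y + 1 := by
      have := hz
      simpa [PiSet, fmap, hx] using this
    have e1 : fmap (τL, δL, τR, δR) (x, y) = (τL * x + y + 1, -(δL * x)) := by
      simp [fmap, hx]
    rw [e1, fmap_pos _ _ hz']
    have hh : 0 ≤ (hmap (τL, δL, τR, δR) (x, y)).1 := by
      simp only [hmap]
      have : (0:ℝ) ≤ (-x) / (-(τR + δR + 1)) := div_nonneg (by linarith) (by linarith)
      rwa [neg_div_neg_eq] at this
    rw [fmap_pos _ _ hh]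
    simp only [hmap, gmap]
    exact Prod.ext (by field_simp; ring) (by field_simp; ring)
  · push_neg at hx
    have hz' : 0 ≤ τR * x + y + 1 := by
      have := hz
      simpa [PiSet, fmap, not_le.mpr hx] using this
    have e1 : fmap (τL, δL, τR, δR) (x, y) = (τR * x + y + 1, -(δR * x)) := by
      simp [fmap, not_le.mpr hx]
    rw [e1, fmap_pos _ _ hz']
    have hh : (hmap (τL, δL, τR, δR) (x, y)).1 ≤ 0 := by
      simp only [hmap]
      exact div_nonpos_of_nonneg_of_nonpos (le_of_lt hx) (le_of_lt hs)
    have e2 : fmap (gmap (τL, δL, τR, δR)) (hmap (τL, δL, τR, δR) (x, y)) =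
        ((gmap (τL, δL, τR, δR)).1 * (hmap (τL, δL, τR, δR) (x, y)).1 +
          (hmap (τL, δL, τR, δR) (x, y)).2 + 1,
         -((gmap (τL, δL, τR, δR)).2.1 * (hmap (τL, δL, τR, δR) (x, y)).1)) := by
      simp [fmap, hh]
    rw [e2]
    simp only [hmap, gmap]
    exact Prod.ext (by field_simp; ring) (by field_simp; ring)

end
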